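/- arXiv:2007.04236 — 2 statements merged into one kernel-verified Lean document; each statement's English description precedes it below -/
import Mathlib

section
/- Let f be a function holomorphic on an open set containing the closed disc D̄_r(w₀) ⊂ ℂ. Then for any z in the open disc D_r(w₀), (1/(2πi)) ∮_{|w - w₀| = r} conj(f(w)) / (w - z) dw = conj(f(w₀)). (Antiholomorphic Cauchy integral formula: the integral is independent of z and recovers the conjugate value at the center.) -/
/-!
On the circle `|w - w₀| = r` we have `conj (w - w₀) = r ^ 2 / (w - w₀)`. Conjugating the integral
therefore turns `conj (f w)` back into `f w` and the kernel `(w - z)⁻¹` into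
`(w - w₀)⁻¹ * r ^ 2 / (r ^ 2 - conj (z - w₀) * (w - w₀))`, whose second factor has its only pole
outside the closed disc. Cauchy's formula at the centre evaluates the conjugated integral to
`-2πi f(w₀)`.
-/

open Metric ComplexConjugate

lemma Complex.conj_eq_norm_sq_div (u : ℂ) : conj u = ‖u‖ ^ 2 / u := by
  rcases eq_or_ne u 0 with rfl | hu
  · simp
  · rw [eq_div_iff hu, mul_comm, Complex.mul_conj, Complex.normSq_eq_norm_sq]
    push_cast
    ring

lemma circleIntegral.conj_integral (g : ℂ → ℂ) (c : ℂ) (R : ℝ) :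
    conj (∮ w in C(c, R), g w) = -∮ w in C(c, R), (R / (w - c)) ^ 2 * conj (g w) := by
  simp only [circleIntegral, ← intervalIntegral.intervalIntegral_conj,
    ← intervalIntegral.integral_neg]
  congr 1
  funext θ
  rw [deriv_circleMap, circleMap_sub_center]
  simp only [smul_eq_mul, map_mul, Complex.conj_I]
  rw [Complex.conj_eq_norm_sq_div (circleMap 0 R θ), norm_circleMap_zero]
  rcases eq_or_ne R 0 with rfl | hR
  · simp
  · have : circleMap 0 R θ ≠ 0 := by simpa [circleMap] using hR
    rw [← Complex.ofReal_pow, sq_abs, Complex.ofReal_pow]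
    field_simp

lemma Complex.sq_div_mul_conj_div_sub_of_norm_eq {u b f : ℂ} {r : ℝ} (hu : ‖u‖ = r) :
    (r / u) ^ 2 * conj (conj f / (u - b)) = u⁻¹ * (r ^ 2 * f / (r ^ 2 - conj b * u)) := by
  rcases eq_or_ne u 0 with rfl | hu0
  · simp
  have hconj : conj (u - b) = (r ^ 2 - conj b * u) / u := by
    rw [map_sub, Complex.conj_eq_norm_sq_div u, hu]
    field_simp
  rw [map_div₀, Complex.conj_conj, hconj]
  field_simp

theorem stmt6_general (f : ℂ → ℂ) (w₀ z : ℂ) (r : ℝ)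
    (s : Set ℂ) (hsub : closedBall w₀ r ⊆ s)
    (hf : DifferentiableOn ℂ f s) (hz : z ∈ ball w₀ r) :
    (2 * Real.pi * Complex.I)⁻¹ *
      (∮ w in C(w₀, r), (starRingEnd ℂ) (f w) / (w - z)) =
      (starRingEnd ℂ) (f w₀) := by
  have hr : 0 < r := pos_of_mem_ball hz
  set g : ℂ → ℂ := fun w => r ^ 2 * f w / (r ^ 2 - conj (z - w₀) * (w - w₀))
  have hden : ∀ w ∈ closedBall w₀ r, (r : ℂ) ^ 2 - conj (z - w₀) * (w - w₀) ≠ 0 := by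
    intro w hw
    refine sub_ne_zero.2 (ne_of_apply_ne norm (ne_of_gt ?_))
    rw [norm_mul, Complex.norm_conj, ← Complex.ofReal_pow, Complex.norm_of_nonneg (by positivity),
      sq, ← dist_eq_norm, ← dist_eq_norm]
    exact mul_lt_mul_of_lt_of_le_of_nonneg_of_pos (mem_ball.1 hz) (mem_closedBall.1 hw)
      dist_nonneg hr
  have hg : DifferentiableOn ℂ g (closedBall w₀ r) :=
    ((hf.mono hsub).const_mul _).div
      ((differentiableOn_const _).sub ((differentiableOn_id.sub_const _).const_mul _)) hden
  have hg₀ : g w₀ = f w₀ := by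
    simp [g, mul_div_cancel_left₀ _ (pow_ne_zero 2 (Complex.ofReal_ne_zero.2 hr.ne'))]
  have hreflect : conj (∮ w in C(w₀, r), conj (f w) / (w - z)) =
      -∮ w in C(w₀, r), (w - w₀)⁻¹ • g w := by
    rw [circleIntegral.conj_integral]
    congr 1
    refine circleIntegral.integral_congr hr.le fun w hw => ?_
    have := Complex.sq_div_mul_conj_div_sub_of_norm_eq (f := f w) (b := z - w₀)
      (mem_sphere_iff_norm.1 hw)
    rwa [sub_sub_sub_cancel_right] at this
  have hcauchy : (∮ w in C(w₀, r), (w - w₀)⁻¹ • g w) = (2 * Real.pi * Complex.I) • f w₀ := by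
    rw [hg.circleIntegral_sub_inv_smul (mem_ball_self hr), hg₀]
  have hintegral : (∮ w in C(w₀, r), conj (f w) / (w - z)) =
      2 * Real.pi * Complex.I * conj (f w₀) := by
    rw [← Complex.conj_conj (∮ w in C(w₀, r), _), hreflect, hcauchy]
    simp [map_ofNat]
  rw [hintegral, inv_mul_cancel_left₀ Complex.two_pi_I_ne_zero]

/-- antiholomorphic Cauchy integral formula. If `f` is
holomorphic on an open set containing the closed disc of radius `r` about
`w₀`, then for every `z` in the open disc,
`(1/(2πi)) ∮_{|w - w₀| = r} conj (f w) / (w - z) dw = conj (f w₀)`. -/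
theorem stmt6 (f : ℂ → ℂ) (w₀ z : ℂ) (r : ℝ) (hr : 0 < r)
    (s : Set ℂ) (hs : IsOpen s) (hsub : closedBall w₀ r ⊆ s)
    (hf : DifferentiableOn ℂ f s) (hz : z ∈ ball w₀ r) :
    (2 * Real.pi * Complex.I)⁻¹ *
      (∮ w in C(w₀, r), (starRingEnd ℂ) (f w) / (w - z)) =
      (starRingEnd ℂ) (f w₀) :=
  stmt6_general f w₀ z r s hsub hf hz
end

section
/- Under the hypotheses of the previous statement (Morita context of unital rings with lift 1_B = Σ[yⁱ,xⁱ] and idempotent P = ((xⁱ,yʲ))), for every matrix (a_{ij}) ∈ M_k(A) there exists b ∈ B, namely b = Σ_{j,l} [yʲ a_{jl}, x^l], such that P (a_{ij}) P = ((xⁱ, b yʲ))_{ij}. Hence the map f(b) = ((xⁱ, b yʲ)) is surjective onto P M_k(A) P. -/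
/-- A Morita-context datum: unital rings `A`, `B`, an `(A,B)`-bimodule `X`,
a `(B,A)`-bimodule `Y` (actions given as explicit functions), together with
balanced bilinear pairings `ip : X × Y → A` and `bk : Y × X → B` satisfying
the Morita compatibility identities. -/
structure MoritaContext (A B X Y : Type*) [Ring A] [Ring B]
    [AddCommGroup X] [AddCommGroup Y] where
  /-- left action of `A` on `X` -/
  sAX : A → X → X
  /-- right action of `B` on `X` -/
  sXB : X → B → X
  /-- left action of `B` on `Y` -/
  sBY : B → Y → Y
  /-- right action of `A` on `Y` -/
  sYA : Y → A → Y
  /-- the `A`-valued pairing `(·,·) : X × Y → A` -/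
  ip : X → Y → A
  /-- the `B`-valued pairing `[·,·] : Y × X → B` -/
  bk : Y → X → B
  ip_add_left : ∀ x x' y, ip (x + x') y = ip x y + ip x' y
  ip_add_right : ∀ x y y', ip x (y + y') = ip x y + ip x y'
  ip_smul_left : ∀ a x y, ip (sAX a x) y = a * ip x y
  ip_smul_right : ∀ x y a, ip x (sYA y a) = ip x y * a
  ip_balanced : ∀ x b y, ip (sXB x b) y = ip x (sBY b y)
  bk_add_left : ∀ y y' x, bk (y + y') x = bk y x + bk y' x
  bk_add_right : ∀ y x x', bk y (x + x') = bk y x + bk y x'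
  bk_smul_left : ∀ b y x, bk (sBY b y) x = b * bk y x
  bk_smul_right : ∀ y x b, bk y (sXB x b) = bk y x * b
  bk_balanced : ∀ y a x, bk (sYA y a) x = bk y (sAX a x)
  compat_left : ∀ x₁ y x₂, sAX (ip x₁ y) x₂ = sXB x₁ (bk y x₂)
  compat_right : ∀ y₁ x y₂, sBY (bk y₁ x) y₂ = sYA y₁ (ip x y₂)
  sAX_one : ∀ x, sAX 1 x = x
  sXB_one : ∀ x, sXB x 1 = x
  sBY_one : ∀ y, sBY 1 y = y
  sYA_one : ∀ y, sYA y 1 = y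
  sAX_add : ∀ a a' x, sAX (a + a') x = sAX a x + sAX a' x
  sXB_add : ∀ x b b', sXB x (b + b') = sXB x b + sXB x b'
  sBY_add : ∀ b b' y, sBY (b + b') y = sBY b y + sBY b' y
  sYA_add : ∀ y a a', sYA y (a + a') = sYA y a + sYA y a'

lemma MoritaContext.sBY_sum {A B X Y : Type*} [Ring A] [Ring B]
    [AddCommGroup X] [AddCommGroup Y] (M : MoritaContext A B X Y)
    {ι : Type*} (s : Finset ι) (g : ι → B) (y : Y) :
    M.sBY (∑ i ∈ s, g i) y = ∑ i ∈ s, M.sBY (g i) y :=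
  map_sum (AddMonoidHom.mk' (fun b => M.sBY b y) (fun b b' => M.sBY_add b b' y)) g s

lemma MoritaContext.ip_sum {A B X Y : Type*} [Ring A] [Ring B]
    [AddCommGroup X] [AddCommGroup Y] (M : MoritaContext A B X Y)
    {ι : Type*} (s : Finset ι) (x : X) (g : ι → Y) :
    M.ip x (∑ i ∈ s, g i) = ∑ i ∈ s, M.ip x (g i) :=
  map_sum (AddMonoidHom.mk' (M.ip x) (fun y y' => M.ip_add_right x y y')) g s

/-- With the Morita context, lift `1_B = ∑ i, [yⁱ, xⁱ]`
and idempotent `P = ((xⁱ, yʲ))`, for every `(a_{ij}) ∈ M_k(A)` the element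
`b = ∑_{j,l} [yʲ a_{jl}, xˡ] ∈ B` satisfies `P (a_{ij}) P = ((xⁱ, b yʲ))`;
hence `f(b) = ((xⁱ, b yʲ))` is surjective onto `P M_k(A) P`. -/
theorem stmt13 {A B X Y : Type*} [Ring A] [Ring B]
    [AddCommGroup X] [AddCommGroup Y] (M : MoritaContext A B X Y)
    {k : ℕ} (xs : Fin k → X) (ys : Fin k → Y)
    (hlift : ∑ i, M.bk (ys i) (xs i) = 1) :
    let P : Matrix (Fin k) (Fin k) A := Matrix.of fun i j => M.ip (xs i) (ys j)
    let f : B → Matrix (Fin k) (Fin k) A :=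
      fun b => Matrix.of fun i j => M.ip (xs i) (M.sBY b (ys j))
    (∀ a : Matrix (Fin k) (Fin k) A,
      P * a * P = f (∑ j, ∑ l, M.bk (M.sYA (ys j) (a j l)) (xs l))) ∧
    (∀ m : Matrix (Fin k) (Fin k) A, P * m * P = m → ∃ b, f b = m) := by
  intro P f
  have key : ∀ a : Matrix (Fin k) (Fin k) A,
      P * a * P = f (∑ j, ∑ l, M.bk (M.sYA (ys j) (a j l)) (xs l)) := by
    intro a
    ext i j
    simp only [f, P, Matrix.mul_apply, Matrix.of_apply]
    rw [M.sBY_sum]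
    simp only [M.sBY_sum, M.ip_sum, M.compat_right, M.ip_smul_right]
    rw [Finset.sum_comm]
    simp [Finset.sum_mul]
  refine ⟨key, fun m hm => ⟨_, (key m).symm.trans hm⟩⟩
end
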